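/- Conditional characteristic function identity under Q: In the following setting, for every pair of integers 0 ≤ m < n ≤ n_p, every choice of vectors ξ_{m+1}, …, ξ_n ∈ ℝ^{n₀}, and every A ∈ F_m, one has ∫_A exp(i Σ_{k=m+1}^n ⟨ξ_k, Z_k⟩) dQ = exp(−½ Σ_{k=m+1}^n |ξ_k|²) · Q(A), where Z_k = cX_k + W_k, i = √−1, and the integral is of a complex-valued function. -/

import Mathlib

/-!
Write `α_{n_p} exp (i ∑ ⟨ξ_k, Z_k⟩)` as the product over `k ≤ n_p` of the factors
`exp (i ⟨ξ_k, c X_k + W_k⟩ - c ⟨X_k, W_k⟩ - c² |X_k|² / 2)`; this uses `|X_k|² = n₀`.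
Given `F_{k-1}`, the vector `X_k` is known while `W_k ~ N(0, I)` is independent of it, and the
modulus of the factor is the density of `N(-c X_k, I)` with respect to `N(0, I)`. Integrating out
`W_k` therefore turns the factor into the Gaussian characteristic function `exp (-|ξ_k|² / 2)`,
whatever the value of `X_k`. Integrating out `W_{n_p}, …, W_{m+1}` in turn proves the claim, and
the case `ξ = 0` identifies the remaining integral with `Q(A)`.
-/

open MeasureTheory ProbabilityTheory Complex Finset

section Gaussian

variable {ι : Type*} [Fintype ι]

lemma integrable_cexp_mul_gaussianReal (z : ℂ) :
    Integrable (fun t : ℝ => cexp (z * t)) (gaussianReal 0 1) :=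
  integrable_cexp_mul_of_re_mem_integrableExpSet (X := id) aemeasurable_id (by simp)

lemma integral_cexp_mul_gaussianReal (z : ℂ) :
    ∫ t, cexp (z * t) ∂gaussianReal 0 1 = cexp (z ^ 2 / 2) := by
  simpa [complexMGF] using complexMGF_id_gaussianReal (μ := 0) (v := 1) z

lemma integrable_cexp_sum_mul_pi_gaussianReal (z : ι → ℂ) :
    Integrable (fun b : ι → ℝ => cexp (∑ i, z i * b i))
      (Measure.pi fun _ => gaussianReal 0 1) := by
  simp_rw [Complex.exp_sum]
  exact Integrable.fintype_prod fun i => integrable_cexp_mul_gaussianReal (z i)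

lemma integral_cexp_sum_mul_pi_gaussianReal (z : ι → ℂ) :
    ∫ b : ι → ℝ, cexp (∑ i, z i * b i) ∂(Measure.pi fun _ => gaussianReal 0 1)
      = cexp (∑ i, z i ^ 2 / 2) := by
  simp_rw [Complex.exp_sum]
  rw [integral_fintype_prod_eq_prod (fun i (t : ℝ) => cexp (z i * t))]
  simp_rw [integral_cexp_mul_gaussianReal]

end Gaussian

section TiltedExp

variable {ι : Type*} [Fintype ι] (c : ℝ) (ξ a : ι → ℝ)

/-- `exp (i ⟨ξ, c a + b⟩)` times the density `exp (-c ⟨a, b⟩ - c² |a|² / 2)` of `N(-c a, I)` with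
respect to `N(0, I)` at `b`. -/
noncomputable def tiltedExp (b : ι → ℝ) : ℂ :=
  cexp (I * ((∑ i, ξ i * (c * a i + b i) : ℝ) : ℂ)
    - ((c * ∑ i, a i * b i + c ^ 2 * (∑ i, a i ^ 2) / 2 : ℝ) : ℂ))

lemma tiltedExp_eq (b : ι → ℝ) :
    tiltedExp c ξ a b = cexp (∑ i, (I * ξ i - c * a i) * b i)
      * cexp (∑ i, (I * c * ξ i * a i - c ^ 2 * a i ^ 2 / 2)) := by
  rw [tiltedExp, ← Complex.exp_add, ← sum_add_distrib]
  push_cast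
  rw [mul_sum, mul_sum, mul_sum, sum_div, ← sum_add_distrib, ← sum_sub_distrib]
  exact congrArg cexp (sum_congr rfl fun i _ => by ring)

lemma Measurable.tiltedExp {Ω : Type*} {m : MeasurableSpace Ω} {f g : Ω → ι → ℝ}
    (hf : Measurable f) (hg : Measurable g) : Measurable fun ω => tiltedExp c ξ (f ω) (g ω) := by
  unfold _root_.tiltedExp
  fun_prop

lemma integrable_tiltedExp :
    Integrable (tiltedExp c ξ a) (Measure.pi fun _ => gaussianReal 0 1) := by
  simp_rw [funext (tiltedExp_eq c ξ a)]
  exact (integrable_cexp_sum_mul_pi_gaussianReal _).mul_const _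

lemma integral_tiltedExp :
    ∫ b, tiltedExp c ξ a b ∂(Measure.pi fun _ => gaussianReal 0 1)
      = cexp (-(1 / 2) * ((∑ i, ξ i ^ 2 : ℝ) : ℂ)) := by
  simp_rw [tiltedExp_eq, integral_mul_const, integral_cexp_sum_mul_pi_gaussianReal,
    ← Complex.exp_add, ← sum_add_distrib]
  push_cast
  rw [mul_sum]
  refine congrArg cexp (sum_congr rfl fun i _ => ?_)
  linear_combination ((ξ i : ℂ) ^ 2 / 2) * I_sq

lemma norm_tiltedExp (b : ι → ℝ) :
    ‖tiltedExp c ξ a b‖ = Real.exp (-(c * ∑ i, a i * b i + c ^ 2 * (∑ i, a i ^ 2) / 2)) := by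
  rw [tiltedExp, Complex.norm_exp]
  simp only [Complex.sub_re, Complex.mul_re, Complex.I_re, Complex.I_im, Complex.ofReal_re,
    Complex.ofReal_im]
  ring_nf

lemma tiltedExp_zero_left (b : ι → ℝ) : tiltedExp c 0 a b = ‖tiltedExp c ξ a b‖ := by
  rw [norm_tiltedExp, Complex.ofReal_exp, tiltedExp]
  simp

lemma integral_norm_tiltedExp :
    ∫ b, ‖tiltedExp c ξ a b‖ ∂(Measure.pi fun _ => gaussianReal 0 1) = 1 := by
  have h := integral_tiltedExp c 0 a
  rw [integral_congr_ae (ae_of_all _ (tiltedExp_zero_left c ξ a)), integral_complex_ofReal] at h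
  simpa using h

end TiltedExp

lemma prod_tiltedExp_of_sign {ι κ : Type*} [Fintype ι] (c : ℝ) (s : Finset κ) (ζ a b : κ → ι → ℝ)
    (ha : ∀ k i, a k i = 1 ∨ a k i = -1) :
    ∏ k ∈ s, tiltedExp c (ζ k) (a k) (b k)
      = (Real.exp (-c * ∑ k ∈ s, ∑ i, a k i * b k i - c ^ 2 * Fintype.card ι * #s / 2) : ℂ)
        * cexp (I * ((∑ k ∈ s, ∑ i, ζ k i * (c * a k i + b k i) : ℝ) : ℂ)) := by
  have hsq : ∀ k, ∑ i, a k i ^ 2 = Fintype.card ι := fun k => by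
    rw [← card_univ, card_eq_sum_ones, Nat.cast_sum, Nat.cast_one]
    exact sum_congr rfl fun i _ => by rcases ha k i with h | h <;> simp [h]
  simp only [tiltedExp, hsq, ← Complex.exp_sum, Complex.ofReal_exp, ← Complex.exp_add]
  congr 1
  push_cast
  simp only [sum_sub_distrib, sum_add_distrib, ← mul_sum, sum_const, nsmul_eq_mul]
  ring

lemma Finset.sum_apply_ite_mem_of_subset {κ β M : Type*} [DecidableEq κ] [Zero β]
    [AddCommMonoid M] {s t : Finset κ} (hts : t ⊆ s) (ξ : κ → β) (f : κ → β → M)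
    (hf : ∀ k, f k 0 = 0) :
    ∑ k ∈ s, f k (if k ∈ t then ξ k else 0) = ∑ k ∈ t, f k (ξ k) := by
  simp only [apply_ite (f _), hf, sum_ite_mem, inter_eq_right.2 hts]

lemma setIntegral_withDensity_ofReal {Ω : Type*} {mΩ : MeasurableSpace Ω} {P : Measure Ω}
    {f : Ω → ℝ} (hf : Measurable f) (hf_nonneg : ∀ ω, 0 ≤ f ω) {A : Set Ω} (hA : MeasurableSet A)
    (g : Ω → ℂ) :
    ∫ ω in A, g ω ∂(P.withDensity fun ω => ENNReal.ofReal (f ω))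
      = ∫ ω in A, (f ω : ℂ) * g ω ∂P := by
  rw [setIntegral_withDensity_eq_setIntegral_toReal_smul hf.ennreal_ofReal
    (ae_of_all _ fun _ => ENNReal.ofReal_lt_top) g hA]
  refine setIntegral_congr_fun hA fun ω _ => ?_
  rw [ENNReal.toReal_ofReal (hf_nonneg ω), Complex.real_smul]

namespace ProbabilityTheory

variable {Ω α β γ E : Type*} {mΩ : MeasurableSpace Ω} [MeasurableSpace α] [MeasurableSpace β]
  [MeasurableSpace γ] {P : Measure Ω} [IsFiniteMeasure P] [NormedAddCommGroup E]
  {U : Ω → α} {V : Ω → β}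

theorem IndepFun.integrable_comp_prodMk (hUV : IndepFun U V P) (hU : Measurable U)
    (hV : Measurable V) {G : α × β → E} (hG : Integrable G ((P.map U).prod (P.map V))) :
    Integrable (fun ω => G (U ω, V ω)) P := by
  rw [← hUV.map_prod_eq_prod_map_map hU.aemeasurable hV.aemeasurable] at hG
  exact hG.comp_measurable (hU.prodMk hV)

theorem IndepFun.integral_comp_prodMk [NormedSpace ℝ E] (hUV : IndepFun U V P)
    (hU : Measurable U) (hV : Measurable V) {G : α × β → E}
    (hG : Integrable G ((P.map U).prod (P.map V))) :
    ∫ ω, G (U ω, V ω) ∂P = ∫ u, ∫ v, G (u, v) ∂(P.map V) ∂(P.map U) := by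
  have hlaw := hUV.map_prod_eq_prod_map_map hU.aemeasurable hV.aemeasurable
  rw [← integral_prod _ hG, ← hlaw,
    integral_map (hU.prodMk hV).aemeasurable (hlaw ▸ hG.aestronglyMeasurable)]

theorem IndepFun.prodMk_left {W : Ω → γ} (hU : Measurable U) (hV : Measurable V)
    (hW : Measurable W) (hU_VW : IndepFun U (fun ω => (V ω, W ω)) P) (hVW : IndepFun V W P) :
    IndepFun (fun ω => (U ω, V ω)) W P := by
  have hUV : IndepFun U V P := hU_VW.comp measurable_id measurable_fst
  rw [indepFun_iff_map_prod_eq_prod_map_map (hU.prodMk hV).aemeasurable hW.aemeasurable,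
    hUV.map_prod_eq_prod_map_map hU.aemeasurable hV.aemeasurable,
    ← (measurePreserving_prodAssoc (P.map U) (P.map V) (P.map W)).symm.map_eq,
    ← hVW.map_prod_eq_prod_map_map hV.aemeasurable hW.aemeasurable,
    ← hU_VW.map_prod_eq_prod_map_map hU.aemeasurable (hV.prodMk hW).aemeasurable,
    Measure.map_map (MeasurableEquiv.measurable _) (hU.prodMk (hV.prodMk hW))]
  rfl

end ProbabilityTheory

section GaussianInnovations

variable {ι : Type*} [Fintype ι]

theorem integrable_and_integral_mul_tiltedExp {Ω : Type*} {𝒢 mΩ : MeasurableSpace Ω}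
    {P : Measure Ω} [IsFiniteMeasure P] (h𝒢 : 𝒢 ≤ mΩ) (c : ℝ) (ξ : ι → ℝ)
    {Y : Ω → ℂ} {a V : Ω → ι → ℝ} (hY_meas : Measurable[𝒢] Y) (hY : Integrable Y P)
    (ha : Measurable[𝒢] a) (hV : Measurable V)
    (hV_law : P.map V = Measure.pi fun _ => gaussianReal 0 1)
    (hV_indep : Indep 𝒢 (MeasurableSpace.comap V inferInstance) P) :
    Integrable (fun ω => Y ω * tiltedExp c ξ (a ω) (V ω)) P ∧
      ∫ ω, Y ω * tiltedExp c ξ (a ω) (V ω) ∂P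
        = cexp (-(1 / 2) * ((∑ i, ξ i ^ 2 : ℝ) : ℂ)) * ∫ ω, Y ω ∂P := by
  have hU𝒢 : Measurable[𝒢] fun ω => (Y ω, a ω) := hY_meas.prodMk ha
  have hU : Measurable fun ω => (Y ω, a ω) := hU𝒢.mono h𝒢 le_rfl
  have hUV : IndepFun (fun ω => (Y ω, a ω)) V P :=
    (IndepFun_iff_Indep _ _ _).2 (indep_of_indep_of_le_left hV_indep hU𝒢.comap_le)
  let G : (ℂ × (ι → ℝ)) × (ι → ℝ) → ℂ := fun p => p.1.1 * tiltedExp c ξ p.1.2 p.2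
  have hG : Integrable G ((P.map fun ω => (Y ω, a ω)).prod (P.map V)) := by
    have hG_cont : Continuous G := by
      unfold G tiltedExp
      fun_prop
    rw [hV_law, integrable_prod_iff hG_cont.aestronglyMeasurable]
    refine ⟨ae_of_all _ fun u => (integrable_tiltedExp c ξ u.2).const_mul u.1, ?_⟩
    simp only [G, norm_mul, integral_const_mul, integral_norm_tiltedExp, mul_one]
    exact (integrable_map_measure continuous_fst.norm.aestronglyMeasurable hU.aemeasurable).2
      hY.norm
  refine ⟨hUV.integrable_comp_prodMk hU hV hG, ?_⟩
  rw [hUV.integral_comp_prodMk hU hV hG, hV_law]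
  simp only [G, integral_const_mul, integral_tiltedExp]
  rw [integral_mul_const, integral_map hU.aemeasurable continuous_fst.aestronglyMeasurable,
    mul_comm]

variable {Ω : Type*} {mΩ : MeasurableSpace Ω} {P : Measure Ω} [IsFiniteMeasure P]
  {𝔽 : Filtration ℕ mΩ} {a W : ℕ → Ω → ι → ℝ}

theorem measurable_prod_tiltedExp (ha : ∀ k, Measurable[𝔽 k] (a (k + 1)))
    (hW : ∀ k, Measurable[𝔽 (k + 1)] (W (k + 1))) (c : ℝ) (ζ : ℕ → ι → ℝ) (m n : ℕ) :
    Measurable[𝔽 n] fun ω => ∏ k ∈ Ioc m n, tiltedExp c (ζ k) (a k ω) (W k ω) := by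
  refine Finset.measurable_prod _ fun k hk => ?_
  obtain ⟨j, rfl⟩ : ∃ j, k = j + 1 := ⟨k - 1, by grind⟩
  have hjn : j + 1 ≤ n := (mem_Ioc.1 hk).2
  exact Measurable.tiltedExp c (ζ _) ((ha j).mono (𝔽.mono (by omega)) le_rfl)
    ((hW j).mono (𝔽.mono hjn) le_rfl)

theorem integrable_and_integral_mul_prod_tiltedExp (ha : ∀ k, Measurable[𝔽 k] (a (k + 1)))
    (hW : ∀ k, Measurable[𝔽 (k + 1)] (W (k + 1)))
    (hW_indep : ∀ k, Indep (𝔽 k) (MeasurableSpace.comap (W (k + 1)) inferInstance) P)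
    (hW_law : ∀ k, P.map (W (k + 1)) = Measure.pi fun _ => gaussianReal 0 1)
    (c : ℝ) (ζ : ℕ → ι → ℝ) {m : ℕ} {Y : Ω → ℂ} (hY_meas : Measurable[𝔽 m] Y)
    (hY : Integrable Y P) {n : ℕ} (hmn : m ≤ n) :
    Integrable (fun ω => Y ω * ∏ k ∈ Ioc m n, tiltedExp c (ζ k) (a k ω) (W k ω)) P ∧
      ∫ ω, Y ω * ∏ k ∈ Ioc m n, tiltedExp c (ζ k) (a k ω) (W k ω) ∂P
        = cexp (-(1 / 2) * ((∑ k ∈ Ioc m n, ∑ i, ζ k i ^ 2 : ℝ) : ℂ)) * ∫ ω, Y ω ∂P := by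
  induction n, hmn using Nat.le_induction with
  | base => simpa using hY
  | succ n hmn ih =>
    have hmeas : Measurable[𝔽 n] fun ω =>
        Y ω * ∏ k ∈ Ioc m n, tiltedExp c (ζ k) (a k ω) (W k ω) :=
      (hY_meas.mono (𝔽.mono hmn) le_rfl).mul (measurable_prod_tiltedExp ha hW c ζ m n)
    obtain ⟨hint, heq⟩ := integrable_and_integral_mul_tiltedExp (𝔽.le n) c (ζ (n + 1)) hmeas
      ih.1 (ha n) ((hW n).mono (𝔽.le _) le_rfl) (hW_law n) (hW_indep n)
    simp only [prod_Ioc_succ_top (by omega : m ≤ n), sum_Ioc_succ_top (by omega : m ≤ n),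
      ← mul_assoc]
    refine ⟨hint, ?_⟩
    rw [heq, ih.2, ← mul_assoc, ← Complex.exp_add]
    congr 2
    push_cast
    ring

theorem setIntegral_prod_tiltedExp (ha : ∀ k, Measurable[𝔽 k] (a (k + 1)))
    (hW : ∀ k, Measurable[𝔽 (k + 1)] (W (k + 1)))
    (hW_indep : ∀ k, Indep (𝔽 k) (MeasurableSpace.comap (W (k + 1)) inferInstance) P)
    (hW_law : ∀ k, P.map (W (k + 1)) = Measure.pi fun _ => gaussianReal 0 1)
    (c : ℝ) {m n : ℕ} (hmn : m ≤ n) {ζ : ℕ → ι → ℝ} (hζ : ∀ k ≤ m, ζ k = 0) {A : Set Ω}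
    (hA : MeasurableSet[𝔽 m] A) :
    ∫ ω in A, ∏ k ∈ Ioc 0 n, tiltedExp c (ζ k) (a k ω) (W k ω) ∂P
      = cexp (-(1 / 2) * ((∑ k ∈ Ioc m n, ∑ i, ζ k i ^ 2 : ℝ) : ℂ))
        * ∫ ω in A, ∏ k ∈ Ioc 0 n, tiltedExp c 0 (a k ω) (W k ω) ∂P := by
  have hA' : MeasurableSet A := 𝔽.le m A hA
  let ρ : Ω → ℂ := fun ω => ∏ k ∈ Ioc 0 m, tiltedExp c 0 (a k ω) (W k ω)
  have hρ_meas : Measurable[𝔽 m] ρ := by simpa using measurable_prod_tiltedExp ha hW c 0 0 m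
  have hρ_int : Integrable ρ P := by
    simpa using (integrable_and_integral_mul_prod_tiltedExp ha hW hW_indep hW_law c 0
      (Y := fun _ => 1) measurable_const (integrable_const 1) (Nat.zero_le m)).1
  have key (η : ℕ → ι → ℝ) := (integrable_and_integral_mul_prod_tiltedExp ha hW hW_indep hW_law
    c η (hρ_meas.indicator hA) (hρ_int.indicator hA') hmn).2
  have hsplit (η : ℕ → ι → ℝ) (hη : ∀ k ≤ m, η k = 0) :
      ∫ ω in A, ∏ k ∈ Ioc 0 n, tiltedExp c (η k) (a k ω) (W k ω) ∂P
        = ∫ ω, A.indicator ρ ω * ∏ k ∈ Ioc m n, tiltedExp c (η k) (a k ω) (W k ω) ∂P := by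
    rw [← integral_indicator hA']
    refine integral_congr_ae (ae_of_all _ fun ω => ?_)
    by_cases hω : ω ∈ A
    · simp only [Set.indicator_of_mem hω, ρ, ← prod_Ioc_consecutive _ (Nat.zero_le m) hmn]
      exact congrArg (· * _) (prod_congr rfl fun k hk => by rw [hη k (mem_Ioc.1 hk).2])
    · simp [hω]
  rw [hsplit ζ hζ, hsplit (fun _ => 0) fun _ _ => rfl, key, key]
  simp

end GaussianInnovations

section SignalNoise

variable {Ω β γ : Type*} {mΩ : MeasurableSpace Ω} [MeasurableSpace β] [MeasurableSpace γ]

def signalNoiseFiltration (X : ℕ → Ω → β) (W : ℕ → Ω → γ) (hX : ∀ k, Measurable (X k))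
    (hW : ∀ k, Measurable (W k)) : Filtration ℕ mΩ where
  seq n := (⨆ k ≥ 1, MeasurableSpace.comap (X k) inferInstance) ⊔
    (⨆ k ∈ Icc 1 n, MeasurableSpace.comap (W k) inferInstance)
  mono' _ _ hnm := sup_le_sup_left (biSup_mono fun _ hk => Icc_subset_Icc_right hnm hk) _
  le' _ := sup_le (iSup₂_le fun k _ => (hX k).comap_le) (iSup₂_le fun k _ => (hW k).comap_le)

variable {X : ℕ → Ω → β} {W : ℕ → Ω → γ} (hX : ∀ k, Measurable (X k)) (hW : ∀ k, Measurable (W k))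

lemma measurable_signalNoiseFiltration_signal {k : ℕ} (hk : 1 ≤ k) (n : ℕ) :
    Measurable[signalNoiseFiltration X W hX hW n] (X k) :=
  Measurable.of_comap_le (le_sup_of_le_left (le_iSup₂ (f := fun k (_ : k ≥ 1) =>
    MeasurableSpace.comap (X k) inferInstance) k hk))

lemma measurable_signalNoiseFiltration_noise {k n : ℕ} (hk : k ∈ Icc 1 n) :
    Measurable[signalNoiseFiltration X W hX hW n] (W k) :=
  Measurable.of_comap_le (le_sup_of_le_right (le_iSup₂ (f := fun k (_ : k ∈ Icc 1 n) =>
    MeasurableSpace.comap (W k) inferInstance) k hk))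

lemma indep_signalNoiseFiltration_noise {P : Measure Ω} [IsProbabilityMeasure P]
    (hXW : IndepFun (fun ω k => X k ω) (fun ω k => W k ω) P) (hW_iid : iIndepFun W P) (n : ℕ) :
    Indep (signalNoiseFiltration X W hX hW n)
      (MeasurableSpace.comap (W (n + 1)) inferInstance) P := by
  let S := Icc 1 n
  let U : Ω → (ℕ → β) × (S → γ) := fun ω => (fun k => X k ω, fun k => W k ω)
  have hle : signalNoiseFiltration X W hX hW n ≤ MeasurableSpace.comap U inferInstance := by
    refine sup_le (iSup₂_le fun k _ => ?_) (iSup₂_le fun k hk => ?_)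
    · exact (((measurable_pi_apply k).comp measurable_fst).comp (comap_measurable U)).comap_le
    · exact (((measurable_pi_apply (⟨k, hk⟩ : S)).comp measurable_snd).comp
        (comap_measurable U)).comap_le
  have hS_next : IndepFun (fun ω (k : S) => W k ω) (W (n + 1)) P :=
    (hW_iid.indepFun_finset S {n + 1} (by simp [S]) hW).comp measurable_id
      (measurable_pi_apply (⟨n + 1, mem_singleton_self _⟩ : ({n + 1} : Finset ℕ)))
  have hX_next : IndepFun (fun ω k => X k ω) (fun ω => (fun k : S => W k ω, W (n + 1) ω)) P :=
    hXW.comp measurable_id ((measurable_pi_lambda _ fun k => measurable_pi_apply _).prodMk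
      (measurable_pi_apply _))
  exact indep_of_indep_of_le_left ((IndepFun_iff_Indep _ _ _).1
    (hX_next.prodMk_left (measurable_pi_lambda _ hX)
      (measurable_pi_lambda (fun ω (k : S) => W k ω) fun k => hW k)
      (hW _) hS_next)) hle

end SignalNoise

theorem setIntegral_prod_tiltedExp_signalNoise {Ω ι : Type*} [Fintype ι]
    {mΩ : MeasurableSpace Ω} {P : Measure Ω} [IsProbabilityMeasure P] {X W : ℕ → Ω → ι → ℝ}
    (hX : ∀ k, Measurable (X k)) (hW : ∀ k, Measurable (W k))
    (hW_law : ∀ k, 1 ≤ k → P.map (W k) = Measure.pi fun _ => gaussianReal 0 1)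
    (hW_iid : iIndepFun W P) (hXW : IndepFun (fun ω k => X k ω) (fun ω k => W k ω) P)
    (c : ℝ) {m n : ℕ} (hmn : m ≤ n) {ζ : ℕ → ι → ℝ} (hζ : ∀ k ≤ m, ζ k = 0) {A : Set Ω}
    (hA : MeasurableSet[signalNoiseFiltration X W hX hW m] A) :
    ∫ ω in A, ∏ k ∈ Ioc 0 n, tiltedExp c (ζ k) (X k ω) (W k ω) ∂P
      = cexp (-(1 / 2) * ((∑ k ∈ Ioc m n, ∑ i, ζ k i ^ 2 : ℝ) : ℂ))
        * ∫ ω in A, ∏ k ∈ Ioc 0 n, tiltedExp c 0 (X k ω) (W k ω) ∂P :=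
  setIntegral_prod_tiltedExp
    (fun k => measurable_signalNoiseFiltration_signal hX hW (Nat.le_add_left 1 k) k)
    (fun k => measurable_signalNoiseFiltration_noise hX hW (by simp))
    (indep_signalNoiseFiltration_noise hX hW hXW hW_iid)
    (fun k => hW_law (k + 1) (Nat.le_add_left 1 k)) c hmn hζ hA

theorem stmt_16_general
    {Ω : Type*} [mΩ : MeasurableSpace Ω] (P : Measure Ω) [IsProbabilityMeasure P]
    (n₀ : ℕ) (c : ℝ)
    (W : ℕ → Ω → (Fin n₀ → ℝ)) (X : ℕ → Ω → (Fin n₀ → ℝ))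
    (hW_meas : ∀ k, Measurable (W k))
    (hW_law : ∀ k, 1 ≤ k → P.map (W k) = Measure.pi fun _ => gaussianReal 0 1)
    (hW_iid : iIndepFun W P)
    (hX_meas : ∀ k, Measurable (X k))
    (hX_pm : ∀ k ω i, X k ω i = 1 ∨ X k ω i = -1)
    (hXW_indep :
      IndepFun (fun ω => fun k => X k ω) (fun ω => fun k => W k ω) P)
    (F : ℕ → MeasurableSpace Ω)
    (hF : ∀ n, F n =
      (⨆ k ≥ 1, MeasurableSpace.comap (X k) inferInstance) ⊔
        (⨆ k ∈ Finset.Icc 1 n, MeasurableSpace.comap (W k) inferInstance))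
    (α : ℕ → Ω → ℝ)
    (hα : ∀ n ω, α n ω =
      Real.exp (-c * ∑ k ∈ Finset.Icc 1 n, ∑ i, X k ω i * W k ω i
        - c ^ 2 * n₀ * n / 2))
    (n_p : ℕ)
    (Q : Measure Ω)
    (hQ : Q = P.withDensity fun ω => ENNReal.ofReal (α n_p ω))
    (Z : ℕ → Ω → (Fin n₀ → ℝ))
    (hZ : ∀ k ω i, Z k ω i = c * X k ω i + W k ω i) :
    ∀ m n : ℕ, m < n → n ≤ n_p → ∀ ξ : ℕ → (Fin n₀ → ℝ),
      ∀ A : Set Ω, MeasurableSet[F m] A →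
        (∫ ω in A,
            Complex.exp
              (Complex.I *
                ((∑ k ∈ Finset.Icc (m + 1) n, ∑ i, ξ k i * Z k ω i : ℝ) : ℂ)) ∂Q)
          = Complex.exp
              (-(1 / 2) * ((∑ k ∈ Finset.Icc (m + 1) n, ∑ i, ξ k i ^ 2 : ℝ) : ℂ)) *
            ((Q A).toReal : ℂ) := by
  intro m n hmn hn ξ A hA
  obtain rfl : F = signalNoiseFiltration X W hX_meas hW_meas := funext hF
  have hA' : MeasurableSet A := (signalNoiseFiltration X W hX_meas hW_meas).le m A hA
  have hα_meas : Measurable (α n_p) := by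
    rw [show α n_p = _ from funext (hα n_p)]
    fun_prop
  have hQ_int (g : Ω → ℂ) : ∫ ω in A, g ω ∂Q = ∫ ω in A, (α n_p ω : ℂ) * g ω ∂P := by
    rw [hQ]
    exact setIntegral_withDensity_ofReal hα_meas (fun ω => by rw [hα]; positivity) hA' g
  have hα_prod (ζ : ℕ → Fin n₀ → ℝ) (ω : Ω) : ∏ k ∈ Ioc 0 n_p, tiltedExp c (ζ k) (X k ω) (W k ω)
      = α n_p ω * cexp (I * ((∑ k ∈ Ioc 0 n_p, ∑ i, ζ k i * (c * X k ω i + W k ω i) : ℝ) : ℂ)) := by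
    rw [prod_tiltedExp_of_sign c _ ζ _ _ (hX_pm · ω), hα]
    simp [← Icc_add_one_left_eq_Ioc]
  have hQA : ((Q A).toReal : ℂ) = ∫ ω in A, ∏ k ∈ Ioc 0 n_p, tiltedExp c 0 (X k ω) (W k ω) ∂P := by
    simpa [Measure.real, hα_prod] using hQ_int 1
  let ζ : ℕ → Fin n₀ → ℝ := fun k => if k ∈ Icc (m + 1) n then ξ k else 0
  have hsub : ∀ {j}, j ≤ m → Icc (m + 1) n ⊆ Ioc j n_p := fun hj =>
    (Icc_subset_Ioc_iff (by omega)).2 ⟨by omega, hn⟩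
  calc _ = ∫ ω in A, ∏ k ∈ Ioc 0 n_p, tiltedExp c (ζ k) (X k ω) (W k ω) ∂P := by
        rw [hQ_int]
        refine setIntegral_congr_fun hA' fun ω _ => ?_
        rw [hα_prod, sum_apply_ite_mem_of_subset (hsub (Nat.zero_le m)) ξ
          (fun k v => ∑ i, v i * (c * X k ω i + W k ω i)) (by simp)]
        simp only [hZ]
    _ = _ := by
      rw [setIntegral_prod_tiltedExp_signalNoise hX_meas hW_meas hW_law hW_iid hXW_indep c
        (hmn.le.trans hn) (fun k hk => by simp [ζ]; omega) hA, hQA,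
        sum_apply_ite_mem_of_subset (hsub le_rfl) ξ (fun _ v => ∑ i, v i ^ 2) (by simp)]

/-- Conditional characteristic function identity under `Q`: in the setting of
the change of measure `dQ = α_{n_p} dP`, for all `0 ≤ m < n ≤ n_p`, all vectors
`ξ_{m+1}, …, ξ_n ∈ ℝ^{n₀}` and every `A ∈ F_m`,
`∫_A exp(i ∑_{k=m+1}^n ⟨ξ_k, Z_k⟩) dQ = exp(−½ ∑_{k=m+1}^n |ξ_k|²) · Q(A)`. -/
theorem stmt_16
    {Ω : Type*} [mΩ : MeasurableSpace Ω] (P : Measure Ω) [IsProbabilityMeasure P]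
    (n₀ : ℕ) (hn₀ : 0 < n₀) (c : ℝ) (hc : 0 < c)
    (W : ℕ → Ω → (Fin n₀ → ℝ)) (X : ℕ → Ω → (Fin n₀ → ℝ))
    (hW_meas : ∀ k, Measurable (W k))
    (hW_law : ∀ k, 1 ≤ k → P.map (W k) = Measure.pi fun _ => gaussianReal 0 1)
    (hW_iid : iIndepFun W P)
    (hX_meas : ∀ k, Measurable (X k))
    (hX_pm : ∀ k ω i, X k ω i = 1 ∨ X k ω i = -1)
    (hXW_indep :
      IndepFun (fun ω => fun k => X k ω) (fun ω => fun k => W k ω) P)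
    (F : ℕ → MeasurableSpace Ω)
    (hF : ∀ n, F n =
      (⨆ k ≥ 1, MeasurableSpace.comap (X k) inferInstance) ⊔
        (⨆ k ∈ Finset.Icc 1 n, MeasurableSpace.comap (W k) inferInstance))
    (α : ℕ → Ω → ℝ)
    (hα : ∀ n ω, α n ω =
      Real.exp (-c * ∑ k ∈ Finset.Icc 1 n, ∑ i, X k ω i * W k ω i
        - c ^ 2 * n₀ * n / 2))
    (n_p : ℕ) (hn_p : 0 < n_p)
    (Q : Measure Ω)
    (hQ : Q = P.withDensity fun ω => ENNReal.ofReal (α n_p ω))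
    (Z : ℕ → Ω → (Fin n₀ → ℝ))
    (hZ : ∀ k ω i, Z k ω i = c * X k ω i + W k ω i) :
    ∀ m n : ℕ, m < n → n ≤ n_p → ∀ ξ : ℕ → (Fin n₀ → ℝ),
      ∀ A : Set Ω, MeasurableSet[F m] A →
        (∫ ω in A,
            Complex.exp
              (Complex.I *
                ((∑ k ∈ Finset.Icc (m + 1) n, ∑ i, ξ k i * Z k ω i : ℝ) : ℂ)) ∂Q)
          = Complex.exp
              (-(1 / 2) * ((∑ k ∈ Finset.Icc (m + 1) n, ∑ i, ξ k i ^ 2 : ℝ) : ℂ)) *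
            ((Q A).toReal : ℂ) :=
  stmt_16_general (mΩ := mΩ) P n₀ c W X hW_meas hW_law hW_iid hX_meas hX_pm hXW_indep F hF α hα n_p
    Q hQ Z hZ
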